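/- Let κ be a regular uncountable cardinal and let η be an infinite regular cardinal with η < κ. Let T be a tree of height κ and let T' ⊆ T be downward closed (i.e., if s < t and t ∈ T' then s ∈ T') and such that for every α < κ the set T' ∩ T_α is nonempty and has cardinality less than η. Then T has a cofinal branch. (This is the combinatorial core of the paper's Lemma 2.1: an η-c.c. forcing notion with η < κ adds no cofinal branch to a κ-Aronszajn tree, because the set of possible values of a name for a branch forms such a subtree T'.) -/

import Mathlib

universe u

/-- A tree order: the set of strict predecessors of every element is
well-ordered by `<`. -/
def IsTreeOrder (T : Type u) [PartialOrder T] : Prop :=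
  ∀ t : T, IsWellOrder {s : T // s < t} (· < ·)

/-- The height of an element of a tree: the order type of its set of strict
predecessors. -/
noncomputable def treeHeight {T : Type u} [PartialOrder T] (hT : IsTreeOrder T) (t : T) :
    Ordinal.{u} :=
  @Ordinal.type {s : T // s < t} (· < ·) (hT t)

/-- The `α`-th level of a tree: the set of elements of height `α`. -/
noncomputable def treeLevel {T : Type u} [PartialOrder T] (hT : IsTreeOrder T)
    (α : Ordinal.{u}) : Set T :=
  {t | treeHeight hT t = α}

/-- The tree has height `κ`: `κ` is the least ordinal whose level is empty. -/
noncomputable def treeHasHeight {T : Type u} [PartialOrder T] (hT : IsTreeOrder T)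
    (κ : Ordinal.{u}) : Prop :=
  treeLevel hT κ = ∅ ∧ ∀ α < κ, (treeLevel hT α).Nonempty

/-- A cofinal branch of a tree of height `κ`: a chain meeting every level
`α < κ`. -/
noncomputable def IsCofinalBranch {T : Type u} [PartialOrder T] (hT : IsTreeOrder T)
    (κ : Ordinal.{u}) (b : Set T) : Prop :=
  IsChain (· ≤ ·) b ∧ ∀ α < κ, ∃ x ∈ b, x ∈ treeLevel hT α

/-!
Replace `T'` by its pruned part `S`, the nodes of `T'` lying below nodes of `T'` of arbitrarily
large height `< κ`. Since `κ` is regular and the levels of `T'` have fewer than `κ` nodes, `S`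
meets every level and every node of `S` extends inside `S` to every higher level.

The crux is that `S` stops splitting above some level `γ < κ`. Otherwise let `β(γ)` be a level
at which two nodes of `S` that agree up to `γ` differ, and iterate `γ ↦ β(γ)` with suprema along
`η`, getting levels `δ j` for `j ≤ η`, all below `κ` by regularity. Level `δ η` of `S` has
fewer than `η` nodes, so among the pairs of them every splitting visible at some `δ j` is
already visible at one `δ j₀` with `j₀ < η`; the pair chosen at `γ = δ j₀`, extended to level
`δ η`, violates this. Hence the nodes of `S` above a node of level `γ` form a chain, and its
downward closure is a cofinal branch.
-/

open Cardinal Set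

section TreeOrder

variable {T : Type u} [PartialOrder T] (hT : IsTreeOrder T)

theorem treeHeight_eq_typein {s t : T} (h : s < t) :
    treeHeight hT s = @Ordinal.typein _ (· < ·) (hT t) ⟨s, h⟩ := by
  have := hT t
  have := hT s
  rw [← Ordinal.type_subrel]
  exact Ordinal.type_eq.2
    ⟨⟨(Equiv.subtypeSubtypeEquivSubtype (fun hx => lt_trans hx h)).symm, Iff.rfl⟩⟩

theorem treeHeight_lt_treeHeight {s t : T} (h : s < t) : treeHeight hT s < treeHeight hT t := by
  have := hT t
  rw [treeHeight_eq_typein hT h]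
  exact Ordinal.typein_lt_type _ _

theorem treeHeight_mono : Monotone (treeHeight hT) := fun _ _ h =>
  h.lt_or_eq.elim (fun h => (treeHeight_lt_treeHeight hT h).le) fun h => h ▸ le_rfl

theorem exists_lt_treeHeight_eq {t : T} {α : Ordinal.{u}} (h : α < treeHeight hT t) :
    ∃ s < t, treeHeight hT s = α := by
  have := hT t
  obtain ⟨s, rfl⟩ := Ordinal.typein_surj (· < ·) h
  exact ⟨s.1, s.2, treeHeight_eq_typein hT s.2⟩

theorem treeHeight_lt_of_treeLevel_eq_empty {o : Ordinal.{u}} (h : treeLevel hT o = ∅) (t : T) :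
    treeHeight hT t < o := by
  by_contra! hle
  rcases hle.lt_or_eq with hlt | heq
  · obtain ⟨s, -, hs⟩ := exists_lt_treeHeight_eq hT hlt
    exact h.subset (show s ∈ treeLevel hT o from hs)
  · exact h.subset (show t ∈ treeLevel hT o from heq.symm)

theorem le_total_of_le (hT : IsTreeOrder T) {s s' t : T} (h : s ≤ t) (h' : s' ≤ t) :
    s ≤ s' ∨ s' ≤ s := by
  rcases h.lt_or_eq with h | rfl
  · rcases h'.lt_or_eq with h' | rfl
    · have := hT t
      rcases trichotomous_of (· < ·) (⟨s, h⟩ : {x // x < t}) ⟨s', h'⟩ with h | h | h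
      exacts [Or.inl h.le, Or.inl (congrArg Subtype.val h).le, Or.inr h.le]
    · exact Or.inl h.le
  · exact Or.inr h'

theorem le_of_treeHeight_le {s s' t : T} (h : s ≤ t) (h' : s' ≤ t)
    (hh : treeHeight hT s ≤ treeHeight hT s') : s ≤ s' :=
  (le_total_of_le hT h h').elim id fun h'' => h''.lt_or_eq.elim
    (fun hlt => ((treeHeight_lt_treeHeight hT hlt).not_ge hh).elim) fun heq => heq ▸ le_rfl

theorem isChain_lowerClosure (hT : IsTreeOrder T) {c : Set T} (hc : IsChain (· ≤ ·) c) :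
    IsChain (· ≤ ·) (lowerClosure c : Set T) := by
  rintro t ⟨s, hs, hts⟩ t' ⟨s', hs', hts'⟩ -
  rcases eq_or_ne s s' with rfl | hne
  · exact le_total_of_le hT hts hts'
  rcases hc hs hs' hne with h | h
  exacts [le_total_of_le hT (hts.trans h) hts', le_total_of_le hT hts (hts'.trans h)]

/-- The predecessor of `t` at level `α`; for `α ≥ treeHeight hT t` it is `t` itself. -/
noncomputable def treeProj (α : Ordinal.{u}) (t : T) : T :=
  if h : α < treeHeight hT t then (exists_lt_treeHeight_eq hT h).choose else t

theorem treeProj_le (α : Ordinal.{u}) (t : T) : treeProj hT α t ≤ t := by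
  unfold treeProj
  split_ifs with h
  exacts [(exists_lt_treeHeight_eq hT h).choose_spec.1.le, le_rfl]

theorem treeProj_of_treeHeight_le {α : Ordinal.{u}} {t : T} (h : treeHeight hT t ≤ α) :
    treeProj hT α t = t :=
  dif_neg h.not_gt

theorem treeHeight_treeProj {α : Ordinal.{u}} {t : T} (h : α ≤ treeHeight hT t) :
    treeHeight hT (treeProj hT α t) = α := by
  unfold treeProj
  split_ifs with hlt
  exacts [(exists_lt_treeHeight_eq hT hlt).choose_spec.2, (h.eq_of_not_lt hlt).symm]

theorem treeProj_eq_of_le {α : Ordinal.{u}} {s t : T} (h : s ≤ t) (hs : treeHeight hT s = α) :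
    treeProj hT α t = s := by
  have hα : α ≤ treeHeight hT t := hs ▸ treeHeight_mono hT h
  exact le_antisymm
    (le_of_treeHeight_le hT (treeProj_le hT α t) h (by rw [treeHeight_treeProj hT hα, hs]))
    (le_of_treeHeight_le hT h (treeProj_le hT α t) (by rw [treeHeight_treeProj hT hα, hs]))

theorem treeProj_of_le {α : Ordinal.{u}} {s t : T} (h : s ≤ t) (hα : α ≤ treeHeight hT s) :
    treeProj hT α t = treeProj hT α s := by
  have hαt := treeHeight_treeProj hT (hα.trans (treeHeight_mono hT h))
  exact (treeProj_eq_of_le hT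
    (le_of_treeHeight_le hT (treeProj_le hT α t) h (hαt.trans_le hα)) hαt).symm

theorem treeProj_treeProj {α β : Ordinal.{u}} (h : α ≤ β) (t : T) :
    treeProj hT α (treeProj hT β t) = treeProj hT α t := by
  rcases le_or_gt β (treeHeight hT t) with hβ | hβ
  · exact (treeProj_of_le hT (treeProj_le hT β t) (by rwa [treeHeight_treeProj hT hβ])).symm
  · rw [treeProj_of_treeHeight_le hT hβ.le]

theorem treeProj_eq_treeProj_of_le {α β : Ordinal.{u}} (h : α ≤ β) {x y : T}
    (hxy : treeProj hT β x = treeProj hT β y) : treeProj hT α x = treeProj hT α y := by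
  rw [← treeProj_treeProj hT h, hxy, treeProj_treeProj hT h]

end TreeOrder

section PrunedPart

variable {T : Type u} [PartialOrder T] (hT : IsTreeOrder T)

def prunedPart (T' : Set T) (o : Ordinal.{u}) : Set T :=
  {t ∈ T' | ∀ β < o, ∃ s ∈ T', t ≤ s ∧ β ≤ treeHeight hT s}

variable {T' : Set T} {o : Ordinal.{u}}

theorem isLowerSet_prunedPart (hT' : IsLowerSet T') : IsLowerSet (prunedPart hT T' o) :=
  fun _ _ hba ha => ⟨hT' hba ha.1, fun β hβ =>
    (ha.2 β hβ).imp fun _ ⟨hs, has, hβs⟩ => ⟨hs, hba.trans has, hβs⟩⟩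

/-- Pigeonhole over the fewer than `o.cof` nodes of `T'` at level `α`. -/
theorem exists_mem_prunedPart_le (hT' : IsLowerSet T')
    (hsmall : ∀ α < o, #↥(T' ∩ treeLevel hT α) < o.cof) {α : Ordinal.{u}} (hα : α < o)
    {P : T → Prop}
    (hP : ∀ γ, α ≤ γ → γ < o → ∃ u ∈ T', P u ∧ γ ≤ treeHeight hT u) :
    ∃ s ∈ prunedPart hT T' o, treeHeight hT s = α ∧ ∃ u, P u ∧ s ≤ u := by
  have key : ∃ s ∈ T' ∩ treeLevel hT α,
      ∀ c < o, ∃ u ∈ T', P u ∧ s ≤ u ∧ c ≤ treeHeight hT u := by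
    by_contra! h
    choose c hco hc using h
    set γ := max α (⨆ s : ↥(T' ∩ treeLevel hT α), c s.1 s.2)
    have hγ : γ < o := max_lt hα (Ordinal.iSup_lt_of_lt_cof (hsmall α hα) fun s => hco _ _)
    obtain ⟨u, huT', hPu, hγu⟩ := hP γ (le_max_left _ _) hγ
    have hαu : α ≤ treeHeight hT u := (le_max_left _ _).trans hγu
    have hproj : treeProj hT α u ∈ T' ∩ treeLevel hT α :=
      ⟨hT' (treeProj_le hT α u) huT', treeHeight_treeProj hT hαu⟩
    refine (hc _ hproj u huT' hPu (treeProj_le hT α u)).not_ge (le_trans ?_ hγu)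
    exact (Ordinal.le_iSup (fun s : ↥(T' ∩ treeLevel hT α) => c s.1 s.2) ⟨_, hproj⟩).trans
      (le_max_right _ _)
  obtain ⟨s, ⟨hsT', hsα⟩, hs⟩ := key
  refine ⟨s, ⟨hsT', fun β hβ => ?_⟩, hsα, ?_⟩
  · obtain ⟨u, hu, -, hsu, hβu⟩ := hs β hβ
    exact ⟨u, hu, hsu, hβu⟩
  · obtain ⟨u, -, hPu, hsu, -⟩ := hs α hα
    exact ⟨u, hPu, hsu⟩

theorem prunedPart_inter_treeLevel_nonempty (hT' : IsLowerSet T')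
    (hsmall : ∀ α < o, #↥(T' ∩ treeLevel hT α) < o.cof)
    (hne : ∀ α < o, (T' ∩ treeLevel hT α).Nonempty)
    {α : Ordinal.{u}} (hα : α < o) : (prunedPart hT T' o ∩ treeLevel hT α).Nonempty := by
  obtain ⟨s, hs, hsα, -⟩ := exists_mem_prunedPart_le hT hT' hsmall hα (P := fun _ => True)
    fun γ _ hγ => (hne γ hγ).imp fun u ⟨huT', hu⟩ => ⟨huT', trivial, hu.ge⟩
  exact ⟨s, hs, hsα⟩

theorem exists_mem_prunedPart_treeHeight_eq (hT' : IsLowerSet T')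
    (hsmall : ∀ α < o, #↥(T' ∩ treeLevel hT α) < o.cof) {t : T} (ht : t ∈ prunedPart hT T' o)
    {β : Ordinal.{u}} (hβ : β < o) (htβ : treeHeight hT t ≤ β) :
    ∃ s ∈ prunedPart hT T' o, treeHeight hT s = β ∧ t ≤ s := by
  obtain ⟨s, hs, hsβ, u, htu, hsu⟩ :=
    exists_mem_prunedPart_le hT hT' hsmall hβ (P := (t ≤ ·)) fun γ _ hγ => by
      obtain ⟨u, hu, htu, hγu⟩ := ht.2 γ hγ
      exact ⟨u, hu, htu, hγu⟩
  exact ⟨s, hs, hsβ, le_of_treeHeight_le hT htu hsu (hsβ ▸ htβ)⟩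

end PrunedPart

section SupIterate

noncomputable def supIterate (F : Ordinal.{u} → Ordinal.{u}) (j : Ordinal.{u}) : Ordinal.{u} :=
  ⨆ i : Iio j, F (supIterate F i)
termination_by j
decreasing_by exact i.2

variable (F : Ordinal.{u} → Ordinal.{u})

theorem supIterate_eq (j : Ordinal.{u}) :
    supIterate F j = ⨆ i : Iio j, F (supIterate F i) := by
  rw [supIterate]

theorem apply_supIterate_le {i j : Ordinal.{u}} (h : i < j) :
    F (supIterate F i) ≤ supIterate F j := by
  rw [supIterate_eq F j]
  exact Ordinal.le_iSup (fun k : Iio j => F (supIterate F k)) ⟨i, h⟩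

theorem supIterate_mono : Monotone (supIterate F) := fun i j h => by
  rw [supIterate_eq F i]
  exact Ordinal.iSup_le fun k => apply_supIterate_le F (k.2.trans_le h)

theorem supIterate_lt {c : Ordinal.{u}} (hF : ∀ γ < c, F γ < c) {j : Ordinal.{u}}
    (hj : j.card < c.cof) : supIterate F j < c := by
  induction j using WellFoundedLT.induction with
  | ind j ih =>
    rw [supIterate_eq]
    refine Ordinal.lift_iSup_lt_of_lt_cof ?_
      fun i => hF _ (ih i i.2 ((Ordinal.card_le_card i.2.le).trans_lt hj))
    rwa [mk_Iio_ordinal, lift_lift, ← Ordinal.lift_cof, lift_lt]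

end SupIterate

section Splitting

variable {T : Type u} [PartialOrder T] (hT : IsTreeOrder T)

theorem exists_forall_treeProj_eq_of_treeProj_eq {η : Cardinal.{u}} (hη : η.IsRegular)
    {δ : Ordinal.{u} → Ordinal.{u}} (hδ : Monotone δ) {A : Set T} (hA : #A < η) :
    ∃ j₀ < η.ord, ∀ x ∈ A, ∀ y ∈ A, treeProj hT (δ j₀) x = treeProj hT (δ j₀) y →
      ∀ j < η.ord, treeProj hT (δ j) x = treeProj hT (δ j) y := by
  let splitAt (p : A × A) : Set Ordinal.{u} :=
    {j | j < η.ord ∧ treeProj hT (δ j) p.1 ≠ treeProj hT (δ j) p.2}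
  have hsplit (p : A × A) : sInf (splitAt p) < η.ord := by
    rcases (splitAt p).eq_empty_or_nonempty with h | h
    · rw [h, Ordinal.sInf_empty]
      exact hη.ord_pos
    · exact (csInf_mem h).1
  refine ⟨⨆ p, sInf (splitAt p), Ordinal.iSup_lt_of_lt_cof ?_ hsplit, ?_⟩
  · rw [hη.cof_ord, mk_prod, lift_id]
    exact mul_lt_of_lt hη.aleph0_le hA hA
  · intro x hx y hy hxy j hj
    by_contra hne
    let p : A × A := (⟨x, hx⟩, ⟨y, hy⟩)
    exact (csInf_mem ⟨j, hj, hne⟩ : sInf (splitAt p) ∈ splitAt p).2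
      (treeProj_eq_treeProj_of_le hT (hδ (Ordinal.le_iSup (fun p => sInf (splitAt p)) p)) hxy)

theorem exists_injOn_treeProj {κ η : Cardinal.{u}} (hκ : κ.IsRegular) (hη : η.IsRegular)
    (hηκ : η < κ) {S : Set T}
    (hext : ∀ t ∈ S, ∀ β < κ.ord, treeHeight hT t ≤ β → ∃ s ∈ S, treeHeight hT s = β ∧ t ≤ s)
    (hsmall : ∀ α < κ.ord, #↥(S ∩ treeLevel hT α) < η) :
    ∃ γ < κ.ord, ∀ β, γ ≤ β → β < κ.ord → (S ∩ treeLevel hT β).InjOn (treeProj hT γ) := by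
  by_contra! h
  simp only [Set.InjOn, not_forall] at h
  choose β hγβ hβκ x hx y hy hxy hne using h
  let F (γ : Ordinal.{u}) : Ordinal.{u} := if hγ : γ < κ.ord then β γ hγ else 0
  have hF : ∀ γ < κ.ord, F γ < κ.ord := fun γ hγ => (dif_pos hγ).trans_lt (hβκ γ hγ)
  let δ := supIterate F
  have hδ : ∀ j ≤ η.ord, δ j < κ.ord := fun j hj => supIterate_lt F hF <| by
    rw [hκ.cof_ord]
    exact (Ordinal.card_le_card hj).trans_lt (by rwa [card_ord])
  obtain ⟨j₀, hj₀, hagree⟩ := exists_forall_treeProj_eq_of_treeProj_eq hT hη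
    (supIterate_mono F) (hsmall _ (hδ η.ord le_rfl))
  have hj₁ : j₀ + 1 < η.ord := (isSuccLimit_ord hη.aleph0_le).add_one_lt hj₀
  set γ := δ j₀
  have hγ : γ < κ.ord := hδ j₀ hj₀.le
  have hβ : β γ hγ ≤ δ (j₀ + 1) :=
    (dif_pos hγ).symm.trans_le (apply_supIterate_le F (lt_add_one j₀))
  have hβtop : β γ hγ ≤ δ η.ord := hβ.trans (supIterate_mono F hj₁.le)
  obtain ⟨⟨hxS, hxβ⟩, ⟨hyS, hyβ⟩⟩ := And.intro (hx γ hγ) (hy γ hγ)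
  obtain ⟨x', hx', hx'top, hxx'⟩ := hext _ hxS _ (hδ η.ord le_rfl) (hxβ.trans_le hβtop)
  obtain ⟨y', hy', hy'top, hyy'⟩ := hext _ hyS _ (hδ η.ord le_rfl) (hyβ.trans_le hβtop)
  have hx'y' : treeProj hT γ x' = treeProj hT γ y' := by
    rw [treeProj_of_le hT hxx' (hxβ ▸ hγβ γ hγ), treeProj_of_le hT hyy' (hyβ ▸ hγβ γ hγ), hxy]
  refine hne γ hγ ((treeProj_eq_of_le hT hxx' hxβ).symm.trans (Eq.trans ?_
    (treeProj_eq_of_le hT hyy' hyβ)))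
  exact treeProj_eq_treeProj_of_le hT hβ (hagree x' ⟨hx', hx'top⟩ y' ⟨hy', hy'top⟩ hx'y' _ hj₁)

theorem isCofinalBranch_lowerClosure_of_injOn {o γ : Ordinal.{u}} {S : Set T} (hS : IsLowerSet S)
    (hheight : ∀ t : T, treeHeight hT t < o)
    (hext : ∀ t ∈ S, ∀ β < o, treeHeight hT t ≤ β → ∃ s ∈ S, treeHeight hT s = β ∧ t ≤ s)
    (hinj : ∀ β, γ ≤ β → β < o → (S ∩ treeLevel hT β).InjOn (treeProj hT γ))
    {x : T} (hx : x ∈ S) (hxγ : treeHeight hT x = γ) :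
    IsCofinalBranch hT o (lowerClosure {s ∈ S | x ≤ s}) := by
  have hle : ∀ s ∈ {s ∈ S | x ≤ s}, ∀ s' ∈ {s ∈ S | x ≤ s},
      treeHeight hT s ≤ treeHeight hT s' → s ≤ s' := by
    rintro s ⟨hs, hxs⟩ s' ⟨hs', hxs'⟩ hss'
    have hγs : γ ≤ treeHeight hT s := hxγ ▸ treeHeight_mono hT hxs
    have hproj : s = treeProj hT (treeHeight hT s) s' := by
      refine hinj _ hγs (hheight s) ⟨hs, rfl⟩
        ⟨hS (treeProj_le hT _ s') hs', treeHeight_treeProj hT hss'⟩ ?_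
      rw [treeProj_treeProj hT hγs, treeProj_eq_of_le hT hxs hxγ, treeProj_eq_of_le hT hxs' hxγ]
    exact hproj ▸ treeProj_le hT _ s'
  refine ⟨isChain_lowerClosure hT fun s hs s' hs' _ => ?_, fun α hα => ?_⟩
  · rcases le_total (treeHeight hT s) (treeHeight hT s') with h | h
    exacts [Or.inl (hle s hs s' hs' h), Or.inr (hle s' hs' s hs h)]
  · obtain ⟨s, hs, hsα, hxs⟩ := hext x hx (max α γ) (max_lt hα (hxγ ▸ hheight x))
      (hxγ ▸ le_max_right α γ)
    exact ⟨treeProj hT α s, mem_lowerClosure.2 ⟨s, ⟨hs, hxs⟩, treeProj_le hT α s⟩,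
      treeHeight_treeProj hT (hsα ▸ le_max_left α γ)⟩

end Splitting

theorem narrow_subtree_gives_branch_general {T : Type u} [PartialOrder T]
    (κ η : Cardinal.{u}) (hκreg : κ.IsRegular)
    (hηreg : η.IsRegular) (hηκ : η < κ)
    (hT : IsTreeOrder T) (hheight : treeHasHeight hT κ.ord)
    (T' : Set T)
    (hdc : ∀ s t : T, s < t → t ∈ T' → s ∈ T')
    (hne : ∀ α < κ.ord, (T' ∩ treeLevel hT α).Nonempty)
    (hsmall : ∀ α < κ.ord, Cardinal.mk ↥(T' ∩ treeLevel hT α) < η) :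
    ∃ b : Set T, IsCofinalBranch hT κ.ord b := by
  have hT' : IsLowerSet T' := fun _ _ hba ha =>
    hba.lt_or_eq.elim (fun h => hdc _ _ h ha) fun h => h ▸ ha
  have hsmallcof : ∀ α < κ.ord, #↥(T' ∩ treeLevel hT α) < κ.ord.cof := by
    rw [hκreg.cof_ord]; exact fun α hα => (hsmall α hα).trans hηκ
  have hext := fun t (ht : t ∈ prunedPart hT T' κ.ord) β (hβ : β < κ.ord) =>
    exists_mem_prunedPart_treeHeight_eq hT hT' hsmallcof ht hβ
  obtain ⟨γ, hγ, hinj⟩ := exists_injOn_treeProj hT hκreg hηreg hηκ hext fun α hα =>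
    (mk_le_mk_of_subset (inter_subset_inter_left _ (sep_subset _ _))).trans_lt (hsmall α hα)
  obtain ⟨x, hx, hxγ⟩ := prunedPart_inter_treeLevel_nonempty hT hT' hsmallcof hne hγ
  exact ⟨_, isCofinalBranch_lowerClosure_of_injOn hT (isLowerSet_prunedPart hT hT')
    (treeHeight_lt_of_treeLevel_eq_empty hT hheight.1) hext hinj hx hxγ⟩

/-- Combinatorial core of Lemma 2.1: if `κ` is regular uncountable,
`η < κ` is an infinite regular cardinal, `T` is a tree of height `κ`, and
`T' ⊆ T` is downward closed and meets every level `α < κ` in a nonempty set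
of cardinality `< η`, then `T` has a cofinal branch. -/
theorem narrow_subtree_gives_branch {T : Type u} [PartialOrder T]
    (κ η : Cardinal.{u}) (hκreg : κ.IsRegular) (hκunc : Cardinal.aleph0 < κ)
    (hηreg : η.IsRegular) (hηinf : Cardinal.aleph0 ≤ η) (hηκ : η < κ)
    (hT : IsTreeOrder T) (hheight : treeHasHeight hT κ.ord)
    (T' : Set T)
    (hdc : ∀ s t : T, s < t → t ∈ T' → s ∈ T')
    (hne : ∀ α < κ.ord, (T' ∩ treeLevel hT α).Nonempty)
    (hsmall : ∀ α < κ.ord, Cardinal.mk ↥(T' ∩ treeLevel hT α) < η) :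
    ∃ b : Set T, IsCofinalBranch hT κ.ord b :=
  narrow_subtree_gives_branch_general κ η hκreg hηreg hηκ hT hheight T' hdc hne hsmall
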